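/- arXiv:1810.09289 — 3 statements merged into one kernel-verified Lean document; each statement's English description precedes it below -/
import Mathlib

section
/- Let d_max ≥ 0 and let U = {d : d_lo ≤ d ≤ d_max} with 0 ≤ d_lo. Suppose s0 ≤ s_init ≤ s_max. Let T be a finite discrete time horizon, and let x : T → {0,1} (operation indicator) and m : T → {0,1} (maintenance indicator) with x_t + m_t ≤ 1 for all t. Define s : T → ℝ by s_0 = s_init and s_t = s0 if m_t = 1, else s_t = s_{t-1} + x_t·d_max. Assume s_t ≤ s_max for all t. Define affine coefficients A0_t = s_init if no maintenance occurred at or before t, else A0_t = s0; and A1_t = (number of time steps t' with t_m < t' ≤ t and x_{t'} = 1), where t_m is the most recent maintenance time at or before t. Then for every d ∈ U and every t: (i) m_t·s0 ≤ A0_t + A1_t·d; (ii) A0_t + A1_t·d ≤ s_max + m_t·(s0 − s_max); (iii) A0_t + A1_t·d ≥ A0_{t-1} + A1_{t-1}·d + x_t·d + m_t·(s0 − s_max); (iv) A0_t + A1_t·d ≤ A0_{t-1} + A1_{t-1}·d + x_t·d. -/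
/-- Single-unit, single-operating-mode version of Theorem 1: a feasible solution of the
deterministic degradation problem with worst-case increment `dmax` yields, via the affine
decision rule `(A0, A1)`, a feasible solution of the adjustable robust problem over a box
uncertainty set `[dlo, dmax]` of nonnegative degradation increments. -/
theorem stmt0
    (T : ℕ) (s0 sinit smax dlo dmax : ℝ)
    (x m : ℕ → ℝ) (s A0 A1 : ℕ → ℝ)
    (hdlo : 0 ≤ dlo) (hdmax : dlo ≤ dmax)
    (hs0nonneg : 0 ≤ s0) (hs0 : s0 ≤ sinit) (hsinit : sinit ≤ smax)
    (hx : ∀ t, x t = 0 ∨ x t = 1) (hm : ∀ t, m t = 0 ∨ m t = 1)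
    (hxm : ∀ t, x t + m t ≤ 1)
    -- recursion defining the deterministic degradation signal `s`
    (hsinit0 : s 0 = sinit)
    (hrec : ∀ t, 1 ≤ t → t ≤ T →
      (m t = 1 → s t = s0) ∧ (m t = 0 → s t = s (t - 1) + x t * dmax))
    -- deterministic feasibility: the signal stays below the failure threshold
    (hbound : ∀ t, t ≤ T → s t ≤ smax)
    -- affine decision rule coefficients: `A0 t = sinit` until the first maintenance,
    -- `s0` afterwards; `A1 t` counts operating steps since the most recent maintenance
    (hA00 : A0 0 = sinit) (hA10 : A1 0 = 0)
    (hA0 : ∀ t, 1 ≤ t → t ≤ T →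
      (m t = 1 → A0 t = s0) ∧ (m t = 0 → A0 t = A0 (t - 1)))
    (hA1 : ∀ t, 1 ≤ t → t ≤ T →
      (m t = 1 → A1 t = 0) ∧ (m t = 0 → A1 t = A1 (t - 1) + x t)) :
    ∀ d, dlo ≤ d → d ≤ dmax → ∀ t, 1 ≤ t → t ≤ T →
      (m t * s0 ≤ A0 t + A1 t * d) ∧
      (A0 t + A1 t * d ≤ smax + m t * (s0 - smax)) ∧
      (A0 t + A1 t * d ≥ A0 (t - 1) + A1 (t - 1) * d + x t * d + m t * (s0 - smax)) ∧
      (A0 t + A1 t * d ≤ A0 (t - 1) + A1 (t - 1) * d + x t * d) := by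
  intro d hd1 hd2
  have hd0 : 0 ≤ d := le_trans hdlo hd1
  have key : ∀ t, t ≤ T → 0 ≤ A1 t ∧ s0 ≤ A0 t ∧ A0 t + A1 t * dmax = s t := by
    intro t
    induction t with
    | zero => intro _; simp [hA10, hA00, hsinit0, hs0]
    | succ n ih =>
      intro hle
      have hn : n ≤ T := Nat.le_of_succ_le hle
      obtain ⟨ih1, ih2, ih3⟩ := ih hn
      have h1 : 1 ≤ n + 1 := Nat.succ_le_succ (Nat.zero_le n)
      obtain ⟨hA0a, hA0b⟩ := hA0 (n+1) h1 hle
      obtain ⟨hA1a, hA1b⟩ := hA1 (n+1) h1 hle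
      obtain ⟨hsa, hsb⟩ := hrec (n+1) h1 hle
      rcases hm (n+1) with hm0 | hm1
      · have e0 := hA0b hm0; have e1 := hA1b hm0; have es := hsb hm0
        simp only [Nat.add_sub_cancel] at e0 e1 es
        have hxnn : 0 ≤ x (n+1) := by rcases hx (n+1) with h | h <;> simp [h]
        refine ⟨by rw [e1]; exact add_nonneg ih1 hxnn, by rw [e0]; exact ih2, ?_⟩
        rw [e0, e1, es, ← ih3]; ring
      · have e0 := hA0a hm1; have e1 := hA1a hm1; have es := hsa hm1
        exact ⟨by rw [e1], by rw [e0], by rw [e0, e1, es]; ring⟩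
  intro t ht1 htT
  have htm1 : t - 1 ≤ T := le_trans (Nat.sub_le t 1) htT
  obtain ⟨k1, k2, k3⟩ := key t htT
  obtain ⟨p1, p2, p3⟩ := key (t-1) htm1
  have hst := hbound t htT
  have hstm := hbound (t-1) htm1
  have hub : A0 t + A1 t * d ≤ smax := by
    nlinarith [mul_le_mul_of_nonneg_left hd2 k1]
  have hub' : A0 (t-1) + A1 (t-1) * d ≤ smax := by
    nlinarith [mul_le_mul_of_nonneg_left hd2 p1]
  have hp1d : 0 ≤ A1 (t-1) * d := mul_nonneg p1 hd0
  obtain ⟨hA0a, hA0b⟩ := hA0 t ht1 htT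
  obtain ⟨hA1a, hA1b⟩ := hA1 t ht1 htT
  rcases hm t with hm0 | hm1
  · have e0 := hA0b hm0; have e1 := hA1b hm0
    have hk1d : 0 ≤ A1 t * d := mul_nonneg k1 hd0
    have heq : A1 t * d = A1 (t-1) * d + x t * d := by rw [e1]; ring
    exact ⟨by rw [hm0]; linarith, by rw [hm0]; linarith,
      by rw [hm0]; linarith, by linarith⟩
  · have e0 := hA0a hm1; have e1 := hA1a hm1
    have hx0 : x t = 0 := by
      have := hxm t
      rcases hx t with h | h
      · exact h
      · rw [h, hm1] at this; linarith
    have hz : A1 t * d = 0 := by rw [e1]; ring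
    exact ⟨by rw [hm1, e0]; linarith, by rw [hm1, e0]; linarith,
      by rw [hm1, e0, hx0]; linarith, by rw [e0, hx0]; linarith⟩
end

section
/- Under the assumptions of Theorem 1 (nonnegative box uncertainty set, cost independent of the uncertain parameters), the optimal value of the deterministic problem with d = d_max is an upper bound on the optimal value of the adjustable robust problem with linear decision rules: opt(robust) ≤ opt(deterministic-with-d_max). -/
set_option maxHeartbeats 1000000 in
/-- Corollary of Theorem 1: for the abstract single-unit model with a nonnegative box
uncertainty set `[dlo, dmax]` and a cost independent of the uncertain parameter, the
optimal value of the adjustable robust problem (with affine decision rules) is at most the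
optimal value of the deterministic problem with worst-case increment `dmax`. -/
theorem stmt15
    (T : ℕ) (s0 sinit smax dlo dmax : ℝ)
    (hdlo : 0 ≤ dlo) (hdmax : dlo ≤ dmax)
    (hs0nonneg : 0 ≤ s0) (hs0 : s0 ≤ sinit) (hsinit : sinit ≤ smax)
    (cost : (ℕ → ℝ) → (ℕ → ℝ) → ℝ)
    -- feasible costs of the adjustable robust problem
    (robustCosts : Set ℝ)
    (hrobustCosts : robustCosts = {c : ℝ | ∃ x m : ℕ → ℝ,
      (∀ t, x t = 0 ∨ x t = 1) ∧ (∀ t, m t = 0 ∨ m t = 1) ∧ (∀ t, x t + m t ≤ 1) ∧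
      (∃ A0 A1 : ℕ → ℝ,
        (∀ d, dlo ≤ d → d ≤ dmax → A0 0 + A1 0 * d = sinit) ∧
        (∀ d, dlo ≤ d → d ≤ dmax → ∀ t, 1 ≤ t → t ≤ T →
          m t * s0 ≤ A0 t + A1 t * d ∧
          A0 t + A1 t * d ≤ smax + m t * (s0 - smax) ∧
          A0 t + A1 t * d ≥ A0 (t - 1) + A1 (t - 1) * d + x t * d + m t * (s0 - smax) ∧
          A0 t + A1 t * d ≤ A0 (t - 1) + A1 (t - 1) * d + x t * d)) ∧
      c = cost x m})
    -- feasible costs of the deterministic worst-case problem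
    (detCosts : Set ℝ)
    (hdetCosts : detCosts = {c : ℝ | ∃ x m : ℕ → ℝ,
      (∀ t, x t = 0 ∨ x t = 1) ∧ (∀ t, m t = 0 ∨ m t = 1) ∧ (∀ t, x t + m t ≤ 1) ∧
      (∃ s : ℕ → ℝ, s 0 = sinit ∧
        ∀ t, 1 ≤ t → t ≤ T →
          m t * s0 ≤ s t ∧
          s t ≤ smax + m t * (s0 - smax) ∧
          s t ≥ s (t - 1) + x t * dmax + m t * (s0 - smax) ∧
          s t ≤ s (t - 1) + x t * dmax) ∧
      c = cost x m})
    (hne : detCosts.Nonempty) (hbdd : BddBelow robustCosts) :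
    sInf robustCosts ≤ sInf detCosts := by
  apply csInf_le_csInf hbdd hne
  rw [hrobustCosts, hdetCosts]
  rintro c ⟨x, m, hx, hm, hxm, ⟨s, hseq0, hscon⟩, hc⟩
  refine ⟨x, m, hx, hm, hxm, ?_, hc⟩
  have hs0smax : s0 ≤ smax := le_trans hs0 hsinit
  -- slope: cumulative usage since the last maintenance
  set A1 : ℕ → ℝ := fun t => Nat.rec (0 : ℝ)
    (fun n ih => (1 - m (n + 1)) * (ih + x (n + 1))) t with hA1def
  set A0 : ℕ → ℝ := fun t => s t - A1 t * dmax with hA0def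
  have hA1zero : A1 0 = 0 := rfl
  have hA1succ : ∀ n, A1 (n + 1) = (1 - m (n + 1)) * (A1 n + x (n + 1)) := fun n => rfl
  have hA0eq : ∀ t, A0 t = s t - A1 t * dmax := fun t => rfl
  clear_value A0 A1
  clear hA1def hA0def
  -- s t ≤ smax for all t ≤ T
  have hsmaxall : ∀ t, t ≤ T → s t ≤ smax := by
    intro t htT
    cases t with
    | zero => rw [hseq0]; exact hsinit
    | succ n =>
      have h := hscon (n + 1) (Nat.le_add_left 1 n) htT
      rcases hm (n + 1) with hm0 | hm1
      · rw [hm0] at h; linarith [h.2.1]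
      · rw [hm1] at h; linarith [h.2.1]
  -- invariant: slope nonnegative, intercept at least s0, worst-case value equals s t
  have inv : ∀ t, t ≤ T → 0 ≤ A1 t ∧ s0 ≤ A0 t := by
    intro t htT
    induction t with
    | zero =>
      constructor
      · rw [hA1zero]
      · rw [hA0eq, hA1zero, hseq0]; linarith
    | succ n ih =>
      have hnT : n ≤ T := le_trans (Nat.le_succ n) htT
      obtain ⟨ih1, ih2⟩ := ih hnT
      have h := hscon (n + 1) (Nat.le_add_left 1 n) htT
      have hxn : 0 ≤ x (n + 1) := by rcases hx (n + 1) with h' | h' <;> rw [h'] <;> norm_num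
      rcases hm (n + 1) with hm0 | hm1
      · -- no maintenance: s (n+1) = s n + x (n+1) * dmax, A0 stays
        rw [hm0] at h
        have hstep : s (n + 1) = s n + x (n + 1) * dmax := by
          have h3 := h.2.2.1
          have h4 := h.2.2.2
          simp only [Nat.add_sub_cancel] at h3 h4
          linarith
        have hA1s : A1 (n + 1) = A1 n + x (n + 1) := by rw [hA1succ, hm0]; ring
        constructor
        · rw [hA1s]; linarith
        · rw [hA0eq, hA1s, hstep]
          have := hA0eq n
          nlinarith
      · -- maintenance: s (n+1) = s0, slope resets to 0
        rw [hm1] at h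
        have hsn1 : s (n + 1) = s0 := by linarith [h.1, h.2.1]
        have hA1s : A1 (n + 1) = 0 := by rw [hA1succ, hm1]; ring
        constructor
        · rw [hA1s]
        · rw [hA0eq, hA1s, hsn1]; linarith
  refine ⟨A0, A1, ?_, ?_⟩
  · intro d _ _
    rw [hA0eq, hA1zero, hseq0]; ring
  · intro d hd1 hd2 t ht1 htT
    have hd0 : 0 ≤ d := le_trans hdlo hd1
    obtain ⟨n, rfl⟩ : ∃ n, t = n + 1 := by
      cases t with
      | zero => omega
      | succ n => exact ⟨n, rfl⟩
    simp only [Nat.add_sub_cancel]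
    have hnT : n ≤ T := le_trans (Nat.le_succ n) htT
    obtain ⟨hA1n, hA0n⟩ := inv n hnT
    obtain ⟨hA1n1, hA0n1⟩ := inv (n + 1) htT
    have h := hscon (n + 1) (Nat.le_add_left 1 n) htT
    have hxn : 0 ≤ x (n + 1) := by rcases hx (n + 1) with h' | h' <;> rw [h'] <;> norm_num
    have hsn : s n ≤ smax := hsmaxall n hnT
    have hA0neq : A0 n = s n - A1 n * dmax := hA0eq n
    have hA0n1eq : A0 (n + 1) = s (n + 1) - A1 (n + 1) * dmax := hA0eq (n + 1)
    rcases hm (n + 1) with hm0 | hm1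
    · -- no maintenance
      rw [hm0] at h ⊢
      have hstep : s (n + 1) = s n + x (n + 1) * dmax := by
        have h3 := h.2.2.1
        have h4 := h.2.2.2
        simp only [Nat.add_sub_cancel] at h3 h4
        linarith
      have hA1s : A1 (n + 1) = A1 n + x (n + 1) := by rw [hA1succ, hm0]; ring
      have hA0s : A0 (n + 1) = A0 n := by rw [hA0n1eq, hA0neq, hA1s, hstep]; ring
      have hsn1max : s (n + 1) ≤ smax := hsmaxall (n + 1) htT
      refine ⟨?_, ?_, ?_, ?_⟩
      · nlinarith [mul_nonneg hA1n1 hd0]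
      · nlinarith [mul_nonneg hA1n1 (sub_nonneg.2 hd2)]
      · rw [hA0s, hA1s]; nlinarith [mul_nonneg hxn hd0]
      · rw [hA0s, hA1s]; nlinarith [mul_nonneg hxn hd0]
    · -- maintenance: value is exactly s0
      rw [hm1] at h ⊢
      have hx0 : x (n + 1) = 0 := by
        rcases hx (n + 1) with h' | h'
        · exact h'
        · have := hxm (n + 1); rw [h', hm1] at this; linarith
      have hsn1 : s (n + 1) = s0 := by linarith [h.1, h.2.1]
      have hA1s : A1 (n + 1) = 0 := by rw [hA1succ, hm1]; ring
      have hA0s : A0 (n + 1) = s0 := by rw [hA0n1eq, hA1s, hsn1]; ring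
      refine ⟨?_, ?_, ?_, ?_⟩
      · rw [hA0s, hA1s]; linarith
      · rw [hA0s, hA1s]; linarith
      · rw [hA0s, hA1s]; nlinarith [mul_nonneg hA1n (sub_nonneg.2 hd2)]
      · rw [hA0s, hA1s, hx0]; nlinarith [mul_nonneg hA1n hd0]
end

section
/- Let s0 ≤ s_max, d_max ≥ 0, and consider a schedule x : {1,...,T} → {0,1} of operations on a unit with maintenance inserted greedily at the latest time satisfying Σ_{t'=t_{m,l−1}+1}^{t_{m,l}} x_{t'}·d_max < s_max − s0 for each consecutive pair of maintenance times. Then between any two consecutive maintenance times the worst-case accumulated degradation is strictly less than s_max − s0, and inserting any maintenance later (keeping x fixed) would violate this bound; hence the greedy insertion produces the minimum number of maintenance actions among all maintenance schedules keeping worst-case degradation below s_max − s0. -/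
/-- Greedy latest-feasible maintenance insertion is optimal: given a binary operation
schedule `x` on `{1,...,T}` with worst-case per-operation degradation `dmax` and budget
`smax - s0`, let `f t` be the cumulative worst-case degradation and let
`0 = tm 0 < tm 1 < ... < tm L ≤ T` be the greedy maintenance times, each placed at the
latest time keeping the accumulated degradation since the previous maintenance strictly
below the budget (so that delaying any of them would violate the bound).  Then the greedy
schedule is feasible (every maintenance-free stretch accumulates strictly less than
`smax - s0`), and it uses the minimum number of maintenance actions among all feasible
maintenance schedules. -/
theorem stmt16
    (T : ℕ) (x : ℕ → ℝ) (hx : ∀ t, x t = 0 ∨ x t = 1)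
    (dmax s0 smax : ℝ) (hdmax : 0 ≤ dmax) (hs : s0 ≤ smax)
    (f : ℕ → ℝ) (hf : ∀ t, f t = ∑ t' ∈ Finset.Icc 1 t, x t' * dmax)
    -- feasibility of a maintenance schedule `M`: between consecutive maintenance times
    -- (equivalently, on every maintenance-free stretch) the accumulated worst-case
    -- degradation stays strictly below the budget `smax - s0`
    (Feas : Finset ℕ → Prop)
    (hFeas : ∀ M : Finset ℕ, Feas M ↔ ∀ u v : ℕ, u ≤ v → v ≤ T →
      (∀ w ∈ Finset.Ioo u v, w ∉ M) → f v - f u < smax - s0)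
    -- the greedy maintenance times
    (L : ℕ) (tm : ℕ → ℕ)
    (htm0 : tm 0 = 0) (htmT : tm L ≤ T)
    (htm_mono : ∀ l < L, tm l < tm (l + 1))
    -- each greedy segment respects the budget
    (hseg : ∀ l < L, f (tm (l + 1)) - f (tm l) < smax - s0)
    (htail : f T - f (tm L) < smax - s0)
    -- each greedy maintenance is needed: the horizon cannot be finished without it
    (hneed : ∀ l < L, smax - s0 ≤ f T - f (tm l))
    -- and is placed at the latest feasible time: one step later violates the budget
    (hlatest : ∀ l < L, smax - s0 ≤ f (tm (l + 1) + 1) - f (tm l)) :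
    Feas (Finset.image (fun l => tm l) (Finset.Icc 1 L)) ∧
    ∀ M : Finset ℕ, M ⊆ Finset.Icc 1 T → Feas M → L ≤ M.card := by
  have hx0 : ∀ t, 0 ≤ x t * dmax := by
    intro t; rcases hx t with h | h <;> simp [h, hdmax]
  have hmono : Monotone f := by
    apply monotone_nat_of_le_succ
    intro n
    rw [hf, hf, Finset.sum_Icc_succ_top (Nat.succ_le_succ (Nat.zero_le n))]
    linarith [hx0 (n + 1)]
  have htm_le : ∀ i j, i ≤ j → j ≤ L → tm i ≤ tm j := by
    intro i j hij
    induction j with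
    | zero =>
      intro _
      have : i = 0 := Nat.le_zero.mp hij
      simp [this]
    | succ j ih =>
      intro hjL
      rcases Nat.lt_succ_iff_lt_or_eq.mp (Nat.lt_succ_of_le hij) with h | h
      · exact le_trans (ih (Nat.lt_succ_iff.mp h)
          (le_trans (Nat.le_succ j) hjL)) (le_of_lt (htm_mono j (Nat.lt_of_succ_le hjL)))
      · subst h; exact le_refl _
  constructor
  · rw [hFeas]
    intro u v huv hvT hgap
    set l := Nat.findGreatest (fun l => tm l ≤ u) L with hl
    have hlL : l ≤ L := Nat.findGreatest_le L
    have hlu : tm l ≤ u := by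
      have := Nat.findGreatest_spec (P := fun l => tm l ≤ u) (Nat.zero_le L) (by simp [htm0])
      exact this
    rcases eq_or_lt_of_le hlL with heq | hlt
    · -- l = L : use tail bound
      have h1 : f u ≥ f (tm L) := hmono (heq ▸ hlu)
      have h2 : f v ≤ f T := hmono hvT
      linarith [htail]
    · -- l < L
      have hgt : u < tm (l + 1) := by
        by_contra h
        push_neg at h
        exact Nat.findGreatest_is_greatest (Nat.lt_succ_of_le (le_refl l)) hlt h
      have hvle : v ≤ tm (l + 1) := by
        by_contra h
        push_neg at h
        apply hgap (tm (l + 1)) (Finset.mem_Ioo.mpr ⟨hgt, h⟩)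
        exact Finset.mem_image.mpr ⟨l + 1, Finset.mem_Icc.mpr ⟨Nat.succ_le_succ (Nat.zero_le l), hlt⟩, rfl⟩
      have h1 : f u ≥ f (tm l) := hmono hlu
      have h2 : f v ≤ f (tm (l + 1)) := hmono hvle
      linarith [hseg l hlt]
  · intro M hMsub hMfeas
    rw [hFeas] at hMfeas
    have key : ∀ l, l ≤ L → l ≤ (M ∩ Finset.Icc 1 (tm l)).card := by
      intro l
      induction l with
      | zero => intro _; exact Nat.zero_le _
      | succ l ih =>
        intro hlL
        have hlL' : l < L := Nat.lt_of_succ_le hlL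
        have ihl := ih (le_of_lt hlL')
        -- there is an element of M in (tm l, tm (l+1)]
        have hex : ∃ m ∈ M, tm l < m ∧ m ≤ tm (l + 1) := by
          by_contra hno
          push_neg at hno
          rcases lt_or_ge (tm (l + 1)) T with hTlt | hTge
          · have := hMfeas (tm l) (tm (l + 1) + 1)
              (le_trans (le_of_lt (htm_mono l hlL')) (Nat.le_succ _))
              (Nat.succ_le_of_lt hTlt)
              (by
                intro w hw hwM
                rw [Finset.mem_Ioo] at hw
                exact absurd (Nat.lt_succ_iff.mp hw.2) (not_le_of_gt (hno w hwM hw.1)))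
            linarith [hlatest l hlL']
          · have hTeq : tm (l + 1) = T :=
              le_antisymm (le_trans (htm_le (l + 1) L hlL le_rfl) htmT) hTge
            have := hMfeas (tm l) T
              (le_trans (le_of_lt (htm_mono l hlL')) (hTeq ▸ le_rfl))
              le_rfl
              (by
                intro w hw hwM
                rw [Finset.mem_Ioo] at hw
                exact absurd (le_of_lt (hTeq ▸ hw.2)) (not_le_of_gt (hno w hwM hw.1)))
            linarith [hneed l hlL']
        obtain ⟨m, hmM, hm1, hm2⟩ := hex
        have hmnot : m ∉ M ∩ Finset.Icc 1 (tm l) := by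
          simp only [Finset.mem_inter, Finset.mem_Icc, not_and]
          intro _ h
          omega
        have hsub : insert m (M ∩ Finset.Icc 1 (tm l)) ⊆ M ∩ Finset.Icc 1 (tm (l + 1)) := by
          intro a ha
          rcases Finset.mem_insert.mp ha with rfl | ha
          · exact Finset.mem_inter.mpr ⟨hmM, Finset.mem_Icc.mpr ⟨by omega, hm2⟩⟩
          · rcases Finset.mem_inter.mp ha with ⟨haM, haI⟩
            rcases Finset.mem_Icc.mp haI with ⟨ha1, ha2⟩
            exact Finset.mem_inter.mpr ⟨haM, Finset.mem_Icc.mpr ⟨ha1, le_trans ha2 (le_of_lt (htm_mono l hlL'))⟩⟩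
        calc l + 1 ≤ (M ∩ Finset.Icc 1 (tm l)).card + 1 := by omega
          _ = (insert m (M ∩ Finset.Icc 1 (tm l))).card := (Finset.card_insert_of_notMem hmnot).symm
          _ ≤ (M ∩ Finset.Icc 1 (tm (l + 1))).card := Finset.card_le_card hsub
    calc L ≤ (M ∩ Finset.Icc 1 (tm L)).card := key L le_rfl
      _ ≤ M.card := Finset.card_le_card (Finset.inter_subset_left)
end
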